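/- The sequence of Apéry numbers B_n is strictly log-convex: B_n^2 < B_{n-1} B_{n+1} for all n ≥ 1. -/

import Mathlib

/-!
`B_n` satisfies Apéry's recurrence `(n+1)² B_{n+1} = (11n² + 11n + 3) B_n + n² B_{n-1}`,
obtained by summing over `k` a Wilf–Zeilberger telescoping identity for the summand.

For a positive solution `u` of this recurrence let
`Q_n(x, y) = (n+1)² y² - (11n² + 11n + 3) x y - n² x²`. The recurrence gives
`Q_n(u_n, u_{n+1}) = n² (u_{n-1} u_{n+1} - u_n²)` and
`Q_n(u_{n-1}, u_n) = (n+1)² (u_n² - u_{n-1} u_{n+1})`, so log-convexity at `n` says that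
`u_{n+1}/u_n` lies above the positive root `ρ_n` of `Q_n(1, ·)`, equivalently that `u_n/u_{n-1}`
lies below it. As `u_{n+2}/u_{n+1}` is a decreasing function of `u_{n+1}/u_n`, the lower bound
`u_{n+1}/u_n > ρ_n` gives the upper bound `u_{n+2}/u_{n+1} < ρ_{n+2}`, by a polynomial inequality
valid for `n ≥ 1`. So log-convexity propagates from `n` to `n + 2`, and `n = 1, 2` are checked
directly.
-/

/-- The Apéry numbers `B_n = Σ_{k=0}^n C(n,k)^2 C(n+k,k)`. -/
def aperyB (n : ℕ) : ℕ :=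
  ∑ k ∈ Finset.range (n + 1), (Nat.choose n k) ^ 2 * Nat.choose (n + k) k

open Finset

namespace Nat

variable {R : Type*} [CommRing R]

theorem cast_add_one_sub_mul_choose_add_one (n k : ℕ) :
    ((n : R) + 1 - k) * (n + 1).choose k = (n + 1) * n.choose k := by
  rcases le_or_gt k (n + 1) with hk | hk
  · have h := congrArg (Nat.cast (R := R)) (choose_mul_succ_eq n k)
    push_cast [Nat.cast_sub hk] at h
    linear_combination -h
  · simp [choose_eq_zero_of_lt hk, choose_eq_zero_of_lt (show n < k by omega)]

theorem cast_choose_add_one_mul (n k : ℕ) :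
    (n.choose (k + 1) : R) * (k + 1) = n.choose k * ((n : R) - k) := by
  rcases le_or_gt k n with hk | hk
  · have h := congrArg (Nat.cast (R := R)) (choose_succ_right_eq n k)
    push_cast [Nat.cast_sub hk] at h
    exact h
  · simp [choose_eq_zero_of_lt hk, choose_eq_zero_of_lt (show n < k + 1 by omega)]

end Nat

def aperyTerm (n k : ℕ) : ℤ := (n.choose k : ℤ) ^ 2 * (n + k).choose k

theorem aperyTerm_add_one_left (n k : ℕ) :
    ((n : ℤ) + 1 - k) ^ 2 * aperyTerm (n + 1) k
      = ((n : ℤ) + 1) * (n + k + 1) * aperyTerm n k := by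
  have h₁ := Nat.cast_add_one_sub_mul_choose_add_one (R := ℤ) n k
  have h₂ := Nat.cast_add_one_sub_mul_choose_add_one (R := ℤ) (n + k) k
  push_cast at h₂
  refine mul_left_cancel₀ (show (n : ℤ) + 1 ≠ 0 by positivity) ?_
  unfold aperyTerm
  rw [show n + 1 + k = n + k + 1 by omega]
  calc ((n : ℤ) + 1) * (((n : ℤ) + 1 - k) ^ 2 * ((n + 1).choose k ^ 2 * (n + k + 1).choose k))
      = (((n : ℤ) + 1 - k) * (n + 1).choose k) ^ 2
          * (((n : ℤ) + k + 1 - k) * (n + k + 1).choose k) := by ring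
    _ = (((n : ℤ) + 1) * n.choose k) ^ 2 * (((n : ℤ) + k + 1) * (n + k).choose k) := by
      rw [h₁, h₂]
    _ = _ := by ring

theorem aperyTerm_add_one_right (n k : ℕ) :
    ((k : ℤ) + 1) ^ 3 * aperyTerm n (k + 1)
      = ((n : ℤ) - k) ^ 2 * (n + k + 1) * aperyTerm n k := by
  have h₁ := Nat.cast_choose_add_one_mul (R := ℤ) n k
  have h₂ := congrArg (Nat.cast (R := ℤ)) (Nat.add_one_mul_choose_eq (n + k) k)
  push_cast at h₂
  unfold aperyTerm
  rw [show n + (k + 1) = n + k + 1 by omega]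
  calc ((k : ℤ) + 1) ^ 3 * (n.choose (k + 1) ^ 2 * (n + k + 1).choose (k + 1))
      = ((n.choose (k + 1) : ℤ) * (k + 1)) ^ 2
          * ((n + k + 1).choose (k + 1) * ((k : ℤ) + 1)) := by ring
    _ = (n.choose k * ((n : ℤ) - k)) ^ 2 * (((n : ℤ) + k + 1) * (n + k).choose k) := by
      rw [h₁, h₂]
    _ = _ := by ring

theorem aperyTerm_zero_right (n : ℕ) : aperyTerm n 0 = 1 := by
  simp [aperyTerm]

theorem aperyTerm_self (n : ℕ) : aperyTerm n n = n.centralBinom := by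
  simp [aperyTerm, Nat.centralBinom_eq_two_mul_choose, two_mul]

theorem aperyTerm_eq_zero_of_lt {n k : ℕ} (h : n < k) : aperyTerm n k = 0 := by
  simp [aperyTerm, Nat.choose_eq_zero_of_lt h]

-- The certificate found by Zeilberger's algorithm for the summand `aperyTerm`.
def aperyCert (n : ℕ) : ℕ → ℤ
  | 0 => 0
  | k + 1 =>
    aperyTerm n k * (((k : ℤ) + 1) ^ 2 + (6 * n + 1) * (k + 1) - (11 * n ^ 2 + 15 * n + 4))

theorem aperyTerm_telescope_of_le {m j : ℕ} (hj : j ≤ m) :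
    ((m : ℤ) + 2) ^ 2 * aperyTerm (m + 2) (j + 1)
        - (11 * ((m : ℤ) + 1) ^ 2 + 11 * ((m : ℤ) + 1) + 3) * aperyTerm (m + 1) (j + 1)
        - ((m : ℤ) + 1) ^ 2 * aperyTerm m (j + 1)
      = aperyCert (m + 1) (j + 2) - aperyCert (m + 1) (j + 1) := by
  have e₁ := aperyTerm_add_one_left (m + 1) (j + 1)
  have e₂ := aperyTerm_add_one_left m (j + 1)
  have e₃ := aperyTerm_add_one_right (m + 1) j
  push_cast at e₁ e₂ e₃
  -- `e₁`, `e₂`, `e₃` make every term a rational multiple of `aperyTerm (m + 1) (j + 1)`;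
  -- clearing the denominators leaves a polynomial identity.
  have hD : ((m : ℤ) + 1 - j) ^ 2 * ((m : ℤ) + 1) * ((m : ℤ) + j + 2) ≠ 0 := by
    have : (j : ℤ) ≤ m := by exact_mod_cast hj
    have : (m : ℤ) + 1 - j ≠ 0 := by omega
    positivity
  refine mul_left_cancel₀ hD ?_
  simp only [aperyCert]
  push_cast
  linear_combination ((m : ℤ) + 2) ^ 2 * ((m : ℤ) + 1) * ((m : ℤ) + j + 2) * e₁
    + ((m : ℤ) + 1 - j) ^ 2 * ((m : ℤ) + 1) ^ 2 * e₂
    - ((m : ℤ) + 1) * (((j : ℤ) + 1) ^ 2 + (6 * ((m : ℤ) + 1) + 1) * (j + 1)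
      - (11 * ((m : ℤ) + 1) ^ 2 + 15 * ((m : ℤ) + 1) + 4)) * e₃

theorem aperyTerm_telescope {m k : ℕ} (hk : k ≤ m + 2) :
    ((m : ℤ) + 2) ^ 2 * aperyTerm (m + 2) k
        - (11 * ((m : ℤ) + 1) ^ 2 + 11 * ((m : ℤ) + 1) + 3) * aperyTerm (m + 1) k
        - ((m : ℤ) + 1) ^ 2 * aperyTerm m k
      = aperyCert (m + 1) (k + 1) - aperyCert (m + 1) k := by
  rcases k with _ | j
  · simp only [aperyCert, aperyTerm_zero_right]
    push_cast
    ring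
  rcases Nat.lt_or_ge j (m + 1) with hj | hj
  · exact aperyTerm_telescope_of_le (by omega)
  obtain rfl : j = m + 1 := by omega
  have h := congrArg (Nat.cast (R := ℤ)) (Nat.succ_mul_centralBinom_succ (m + 1))
  push_cast at h
  simp only [aperyCert, aperyTerm_self, aperyTerm_eq_zero_of_lt (Nat.lt_succ_self _),
    aperyTerm_eq_zero_of_lt (show m < m + 1 + 1 by omega)]
  push_cast
  linear_combination ((m : ℤ) + 2) * h

theorem aperyB_eq_sum_aperyTerm {n N : ℕ} (h : n < N) :
    (aperyB n : ℤ) = ∑ k ∈ range N, aperyTerm n k := by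
  rw [aperyB]
  push_cast
  refine sum_subset (range_subset_range.2 h) fun k _ hkn => ?_
  exact aperyTerm_eq_zero_of_lt (by simpa using hkn)

theorem aperyB_recurrence (n : ℕ) :
    (n + 2) ^ 2 * aperyB (n + 2)
      = (11 * (n + 1) ^ 2 + 11 * (n + 1) + 3) * aperyB (n + 1) + (n + 1) ^ 2 * aperyB n := by
  have hsum := sum_congr (s₁ := range (n + 3)) rfl fun k hk =>
    aperyTerm_telescope (m := n) (k := k) (by simp only [mem_range] at hk; omega)
  rw [sum_range_sub (aperyCert (n + 1)), sum_sub_distrib, sum_sub_distrib, ← mul_sum, ← mul_sum,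
    ← mul_sum, ← aperyB_eq_sum_aperyTerm (by omega), ← aperyB_eq_sum_aperyTerm (by omega),
    ← aperyB_eq_sum_aperyTerm (by omega)] at hsum
  simp only [aperyCert, aperyTerm_eq_zero_of_lt (show n + 1 < n + 2 by omega), zero_mul,
    sub_zero] at hsum
  zify
  linear_combination hsum

section

variable {K : Type*} [CommRing K] [LinearOrder K] [IsStrictOrderedRing K]

def SatisfiesAperyRecurrence (u : ℕ → K) : Prop :=
  ∀ n : ℕ, ((n : K) + 2) ^ 2 * u (n + 2)
    = (11 * ((n : K) + 1) ^ 2 + 11 * ((n : K) + 1) + 3) * u (n + 1) + ((n : K) + 1) ^ 2 * u n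

def aperyForm (n x y : K) : K :=
  (n + 1) ^ 2 * y ^ 2 - (11 * n ^ 2 + 11 * n + 3) * x * y - n ^ 2 * x ^ 2

theorem aperyForm_add_two_neg_of_pos {n a b c : K} (hn : 1 ≤ n) (ha : 0 < a) (hb : 0 < b)
    (hc : (n + 2) ^ 2 * c = (11 * (n + 1) ^ 2 + 11 * (n + 1) + 3) * b + (n + 1) ^ 2 * a)
    (hab : 0 < aperyForm n a b) : aperyForm (n + 2) b c < 0 := by
  -- The multiplier of `aperyForm n a b` is forced by the coefficient of `a²`; the coefficients of
  -- `a b` and `b²` left over are then positive for `n ≥ 1`.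
  have key : n ^ 2 * ((n + 2) ^ 4 * -aperyForm (n + 2) b c)
      = ((n + 1) ^ 2 * (n + 3)) ^ 2 * aperyForm n a b
        + (22 * n ^ 6 + 176 * n ^ 5 + 541 * n ^ 4 + 813 * n ^ 3 + 624 * n ^ 2 + 225 * n + 27)
          * (a * b)
        + (121 * n ^ 6 + 898 * n ^ 5 + 2423 * n ^ 4 + 2824 * n ^ 3 + 1167 * n ^ 2 - 60 * n - 9)
          * b ^ 2 := by
    unfold aperyForm
    linear_combination (n ^ 2 * ((11 * n ^ 2 + 55 * n + 69) * (n + 2) ^ 2 * b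
        - (n + 3) ^ 2 * ((n + 2) ^ 2 * c
          + ((11 * (n + 1) ^ 2 + 11 * (n + 1) + 3) * b + (n + 1) ^ 2 * a)))) * hc
  have hn₀ : 0 < n := by linarith
  have hb₂ : 0 < 121 * n ^ 6 + 898 * n ^ 5 + 2423 * n ^ 4 + 2824 * n ^ 3 + 1167 * n ^ 2
      - 60 * n - 9 := by
    nlinarith [pow_pos hn₀ 3, pow_pos hn₀ 4, pow_pos hn₀ 5, pow_pos hn₀ 6]
  have hpos : 0 < n ^ 2 * ((n + 2) ^ 4 * -aperyForm (n + 2) b c) := by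
    rw [key]
    exact add_pos (add_pos (mul_pos (by positivity) hab) (mul_pos (by positivity) (mul_pos ha hb)))
      (mul_pos hb₂ (pow_pos hb 2))
  exact neg_pos.1 (pos_of_mul_pos_right (pos_of_mul_pos_right hpos (by positivity)) (by positivity))

namespace SatisfiesAperyRecurrence

variable {u : ℕ → K}

theorem aperyForm_apply_succ (hu : SatisfiesAperyRecurrence u) (m : ℕ) :
    aperyForm ((m : K) + 1) (u (m + 1)) (u (m + 2))
      = ((m : K) + 1) ^ 2 * (u m * u (m + 2) - u (m + 1) ^ 2) := by
  unfold aperyForm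
  linear_combination u (m + 2) * hu m

theorem aperyForm_apply (hu : SatisfiesAperyRecurrence u) (m : ℕ) :
    aperyForm ((m : K) + 1) (u m) (u (m + 1))
      = ((m : K) + 2) ^ 2 * (u (m + 1) ^ 2 - u m * u (m + 2)) := by
  unfold aperyForm
  linear_combination u m * hu m

theorem sq_lt_mul_add_two (hu : SatisfiesAperyRecurrence u) (hpos : ∀ n, 0 < u n) {m : ℕ}
    (h : u (m + 1) ^ 2 < u m * u (m + 2)) : u (m + 3) ^ 2 < u (m + 2) * u (m + 4) := by
  have h₁ : 0 < aperyForm ((m : K) + 1) (u (m + 1)) (u (m + 2)) := by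
    rw [hu.aperyForm_apply_succ]
    exact mul_pos (by positivity) (sub_pos.2 h)
  have hrec := hu (m + 1)
  push_cast at hrec
  have h₂ := aperyForm_add_two_neg_of_pos (by simp) (hpos _) (hpos _) (c := u (m + 3))
    (by linear_combination hrec) h₁
  rw [show (m : K) + 1 + 2 = ((m + 2 : ℕ) : K) + 1 by push_cast; ring,
    hu.aperyForm_apply] at h₂
  exact sub_neg.1 (neg_of_mul_neg_right h₂ (by positivity))

theorem sq_lt_mul (hu : SatisfiesAperyRecurrence u) (hpos : ∀ n, 0 < u n)
    (h₁ : u 1 ^ 2 < u 0 * u 2) (h₂ : u 2 ^ 2 < u 1 * u 3) (n : ℕ) :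
    u (n + 1) ^ 2 < u n * u (n + 2) := by
  induction n using Nat.twoStepInduction with
  | zero => exact h₁
  | one => exact h₂
  | more n hn _ => exact hu.sq_lt_mul_add_two hpos hn

end SatisfiesAperyRecurrence

end

theorem aperyB_pos (n : ℕ) : 0 < aperyB n :=
  sum_pos' (fun _ _ => Nat.zero_le _) ⟨0, by simp, by simp⟩

theorem satisfiesAperyRecurrence_aperyB :
    SatisfiesAperyRecurrence (fun n => (aperyB n : ℤ)) :=
  fun n => by dsimp only; exact_mod_cast aperyB_recurrence n

theorem aperyB_strict_log_convex (n : ℕ) (hn : 1 ≤ n) :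
    aperyB n ^ 2 < aperyB (n - 1) * aperyB (n + 1) := by
  obtain ⟨m, rfl⟩ : ∃ m, n = m + 1 := ⟨n - 1, by omega⟩
  have h := satisfiesAperyRecurrence_aperyB.sq_lt_mul (fun n => by exact_mod_cast aperyB_pos n)
    (by decide) (by decide) m
  rw [Nat.add_sub_cancel]
  exact_mod_cast h
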